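/- Fix r > 0 and define ε : (0, ∞) → ℝ by ε(θ) = 1 − 2·Φ(−r/θ) − (2θ/(√(2π)·r)) · (1 − e^{−r²/(2θ²)}), where Φ is the cumulative distribution function of the standard normal distribution N(0,1). Then ε is antitone on (0, ∞): for all 0 < θ₁ ≤ θ₂, ε(θ₂) ≤ ε(θ₁). -/

import Mathlib

/-!
Differentiate: the chain-rule term `2 φ(-r/θ) · r/θ²` coming from `Φ(-r/θ)` cancels the part of
the derivative of `θ (1 - e^{-r²/(2θ²)})` produced by the exponential, leaving
`ε'(θ) = -(2 / (√(2π) r)) (1 - e^{-r²/(2θ²)}) ≤ 0`.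
-/

open ProbabilityTheory MeasureTheory Real Set
open scoped NNReal

/-- The cumulative distribution function `Φ` of the standard normal
distribution `N(0, 1)`. -/
noncomputable def stdNormalCDF (x : ℝ) : ℝ :=
  ((ProbabilityTheory.gaussianReal 0 1) (Set.Iic x)).toReal

/-- The collision probability `ε(θ)` of a single p-stable LSH hash of two
points at Euclidean distance `θ`, with bucket width `r`. -/
noncomputable def collisionProb (r θ : ℝ) : ℝ :=
  1 - 2 * stdNormalCDF (-r / θ)
    - (2 * θ / (Real.sqrt (2 * Real.pi) * r)) * (1 - Real.exp (-r ^ 2 / (2 * θ ^ 2)))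

theorem hasDerivAt_integral_Iic {E : Type*} [NormedAddCommGroup E] [NormedSpace ℝ E]
    [CompleteSpace E] {f : ℝ → E} (hf : Integrable f) (hc : Continuous f) (x : ℝ) :
    HasDerivAt (fun y ↦ ∫ t in Iic y, f t) (f x) x := by
  have hsplit : (fun y ↦ ∫ t in Iic y, f t) = fun y ↦ (∫ t in Iic 0, f t) + ∫ t in 0..y, f t := by
    funext y
    rw [← intervalIntegral.integral_Iic_sub_Iic hf.integrableOn hf.integrableOn, add_sub_cancel]
  rw [hsplit]
  exact (hc.integral_hasStrictDerivAt 0 x).hasDerivAt.const_add _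

theorem continuous_gaussianPDFReal (μ : ℝ) (v : ℝ≥0) : Continuous (gaussianPDFReal μ v) := by
  rw [gaussianPDFReal_def]
  fun_prop

theorem hasDerivAt_gaussianReal_Iic (μ : ℝ) {v : ℝ≥0} (hv : v ≠ 0) (x : ℝ) :
    HasDerivAt (fun y ↦ (gaussianReal μ v (Iic y)).toReal) (gaussianPDFReal μ v x) x := by
  have hcdf : (fun y ↦ (gaussianReal μ v (Iic y)).toReal)
      = fun y ↦ ∫ t in Iic y, gaussianPDFReal μ v t := by
    funext y
    rw [gaussianReal_apply_eq_integral μ hv, ENNReal.toReal_ofReal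
      (setIntegral_nonneg measurableSet_Iic fun t _ ↦ gaussianPDFReal_nonneg μ v t)]
  rw [hcdf]
  exact hasDerivAt_integral_Iic (integrable_gaussianPDFReal μ v) (continuous_gaussianPDFReal μ v) x

theorem hasDerivAt_stdNormalCDF (x : ℝ) :
    HasDerivAt stdNormalCDF (gaussianPDFReal 0 1 x) x :=
  hasDerivAt_gaussianReal_Iic 0 one_ne_zero x

theorem gaussianPDFReal_zero_one (x : ℝ) :
    gaussianPDFReal 0 1 x = (√(2 * π))⁻¹ * exp (-x ^ 2 / 2) := by
  simp [gaussianPDFReal]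

theorem hasDerivAt_collisionProb {r θ : ℝ} (hr : r ≠ 0) (hθ : θ ≠ 0) :
    HasDerivAt (collisionProb r)
      (-(2 / (√(2 * π) * r)) * (1 - exp (-r ^ 2 / (2 * θ ^ 2)))) θ := by
  have hΦ := (hasDerivAt_stdNormalCDF (-r / θ)).comp θ
    ((hasDerivAt_const θ (-r)).div (hasDerivAt_id θ) hθ)
  have hE := (((hasDerivAt_const θ (-r ^ 2)).div
    ((hasDerivAt_pow 2 θ).const_mul 2) (by positivity)).exp).const_sub 1
  have hlin := ((hasDerivAt_id θ).const_mul 2).div_const (√(2 * π) * r)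
  refine (((hΦ.const_mul 2).const_sub 1).sub (hlin.mul hE)).congr_deriv ?_
  have hπ : √(2 * π) ≠ 0 := by positivity
  simp only [gaussianPDFReal_zero_one, Pi.div_apply, id]
  field_simp
  ring

/-- The collision probability `ε` is antitone on `(0, ∞)`. -/
theorem collisionProb_antitone (r : ℝ) (hr : 0 < r) :
    ∀ θ₁ θ₂ : ℝ, 0 < θ₁ → θ₁ ≤ θ₂ → collisionProb r θ₂ ≤ collisionProb r θ₁ := by
  intro θ₁ θ₂ hθ₁ hθ₁₂
  have hderiv (θ : ℝ) (hθ : 0 < θ) := hasDerivAt_collisionProb hr.ne' hθ.ne'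
  have hanti : AntitoneOn (collisionProb r) (Ioi 0) := by
    refine antitoneOn_of_hasDerivWithinAt_nonpos (convex_Ioi 0)
      (fun θ hθ ↦ (hderiv θ hθ).continuousAt.continuousWithinAt)
      (fun θ hθ ↦ (hderiv θ (interior_subset hθ)).hasDerivWithinAt) fun θ _ ↦ ?_
    have hexp : exp (-r ^ 2 / (2 * θ ^ 2)) ≤ 1 :=
      exp_le_one_iff.mpr <|
        div_nonpos_of_nonpos_of_nonneg (neg_nonpos.mpr (sq_nonneg r)) (by positivity)
    have hcoef : 0 ≤ 2 / (√(2 * π) * r) := by positivity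
    linarith [mul_nonneg hcoef (sub_nonneg.mpr hexp)]
  exact hanti hθ₁ (hθ₁.trans_le hθ₁₂) hθ₁₂
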